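/- For every real H > 0 with H ≠ 1/√3 there exists an integer m ≥ 2 such that 2·arccot(H) < 2π/m < b₂(H), where arccot(H) = π/2 − arctan(H) and b₂(H) = √2·π·(H + √(1+H²))^{3/2} / ((1+H²)^{1/4}·(1 + 2H² + 2H√(1+H²))). -/

import Mathlib

/-!
With `s = √(1 + H²)` the formula simplifies to `b₂ H = 2π / √(2 s (H + s))`, so it suffices to
find an integer `m ≥ 2` with `√(2 s (H + s)) < m` and `m · arccot H < π`. Take `m = 2` for
`H < 1/√3`, `m = 3` for `1/√3 < H ≤ 1` (where `arccot H < π/3`), `m = 4` for `1 < H ≤ 3/2`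
(where `arccot H < π/4`), and for `H > 3/2` the least integer above `√(2 s (H + s))`, which is
below `π H`, combined with `arccot H < 1/H`. At `H = 1/√3` we have `√(2 s (H + s)) = 2` and
`arccot H = π/3`, so neither `m = 2` nor `m = 3` works there.
-/

open Real

noncomputable def b₂Denom (x : ℝ) : ℝ := √(2 * √(1 + x ^ 2) * (x + √(1 + x ^ 2)))

lemma add_sqrt_one_add_sq_pos (x : ℝ) : 0 < x + √(1 + x ^ 2) := by
  have : |x| < √(1 + x ^ 2) := by
    rw [← sqrt_sq_eq_abs]; exact sqrt_lt_sqrt (sq_nonneg x) (by linarith)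
  linarith [neg_abs_le x]

lemma b₂_formula_eq (x : ℝ) :
    √2 * π * (x + √(1 + x ^ 2)) ^ ((3 : ℝ) / 2)
      / ((1 + x ^ 2) ^ ((1 : ℝ) / 4) * (1 + 2 * x ^ 2 + 2 * x * √(1 + x ^ 2)))
      = 2 * π / b₂Denom x := by
  set s := √(1 + x ^ 2)
  set t := x + s
  have hs : 0 < s := sqrt_pos.mpr (by positivity)
  have hs2 : s ^ 2 = 1 + x ^ 2 := sq_sqrt (by positivity)
  have ht : 0 < t := add_sqrt_one_add_sq_pos x
  have hquarter : (1 + x ^ 2) ^ ((1 : ℝ) / 4) = √s := by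
    rw [show (1 : ℝ) / 4 = 1 / 2 / 2 by norm_num, rpow_div_two_eq_sqrt _ (by positivity),
      ← sqrt_eq_rpow]
  have hthreehalves : t ^ ((3 : ℝ) / 2) = t * √t := by
    rw [rpow_div_two_eq_sqrt _ ht.le, rpow_ofNat, pow_succ, sq_sqrt ht.le]
  have hden : 1 + 2 * x ^ 2 + 2 * x * s = t ^ 2 := by linear_combination -hs2
  have hsqrt : b₂Denom x = √2 * √s * √t := by
    rw [b₂Denom, sqrt_mul (by positivity), sqrt_mul (by positivity)]
  rw [hquarter, hthreehalves, hden, hsqrt, div_eq_div_iff (by positivity) (by positivity)]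
  linear_combination (π * t * √s) * (√t ^ 2 * mul_self_sqrt zero_le_two + 2 * mul_self_sqrt ht.le)

lemma b₂Denom_lt_iff {x y : ℝ} (hy : 0 < y) :
    b₂Denom x < y ↔ 2 * √(1 + x ^ 2) * (x + √(1 + x ^ 2)) < y ^ 2 :=
  sqrt_lt' hy

section
variable {x : ℝ}

lemma b₂Denom_lt_two (hx3 : 3 * x ^ 2 < 1) : b₂Denom x < 2 := by
  have hs2 : √(1 + x ^ 2) ^ 2 = 1 + x ^ 2 := sq_sqrt (by positivity)
  have hxs : x * √(1 + x ^ 2) < 1 - x ^ 2 :=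
    lt_of_pow_lt_pow_left₀ 2 (by nlinarith) (by nlinarith)
  rw [b₂Denom_lt_iff two_pos]
  nlinarith

lemma b₂Denom_lt_three (hx : 0 ≤ x) (hx1 : x ≤ 1) : b₂Denom x < 3 := by
  have hs2 : √(1 + x ^ 2) ^ 2 = 1 + x ^ 2 := sq_sqrt (by positivity)
  have hs : √(1 + x ^ 2) ≤ 3 / 2 := by nlinarith [sqrt_nonneg (1 + x ^ 2)]
  rw [b₂Denom_lt_iff three_pos]
  nlinarith [sqrt_nonneg (1 + x ^ 2)]

lemma b₂Denom_lt_four (hx : 0 ≤ x) (hx1 : x ≤ 3 / 2) : b₂Denom x < 4 := by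
  have hs2 : √(1 + x ^ 2) ^ 2 = 1 + x ^ 2 := sq_sqrt (by positivity)
  have hs : √(1 + x ^ 2) ≤ 2 := by nlinarith [sqrt_nonneg (1 + x ^ 2)]
  rw [b₂Denom_lt_iff four_pos]
  nlinarith [sqrt_nonneg (1 + x ^ 2)]

lemma one_lt_b₂Denom (hx : 0 ≤ x) : 1 < b₂Denom x := by
  have hs2 : √(1 + x ^ 2) ^ 2 = 1 + x ^ 2 := sq_sqrt (by positivity)
  rw [b₂Denom, lt_sqrt zero_le_one]
  nlinarith [sqrt_nonneg (1 + x ^ 2)]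

lemma b₂Denom_add_one_lt (hx : 3 / 2 ≤ x) : b₂Denom x + 1 < π * x := by
  have hs2 : √(1 + x ^ 2) ^ 2 = 1 + x ^ 2 := sq_sqrt (by positivity)
  have hamgm : 2 * x * √(1 + x ^ 2) < 2 * x ^ 2 + 1 := by
    nlinarith [sq_nonneg (x - √(1 + x ^ 2))]
  have hπx : 3.14 * x - 1 ≤ π * x - 1 := by nlinarith [pi_gt_d2]
  have hnum : 4 * x ^ 2 + 3 < (3.14 * x - 1) ^ 2 := by nlinarith
  have hsq := pow_le_pow_left₀ (by linarith) hπx 2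
  rw [← lt_sub_iff_add_lt, b₂Denom_lt_iff (by linarith)]
  nlinarith

end

lemma pi_div_two_sub_arctan_lt_pi_div_three {x : ℝ} (hx : 1 / √3 < x) :
    π / 2 - arctan x < π / 3 := by
  have h := arctan_strictMono hx
  rw [← tan_pi_div_six, arctan_tan (by linarith [pi_pos]) (by linarith [pi_pos])] at h
  linarith

lemma pi_div_two_sub_arctan_lt_pi_div_four {x : ℝ} (hx : 1 < x) :
    π / 2 - arctan x < π / 4 := by
  have h := arctan_strictMono hx
  rw [arctan_one] at h
  linarith

lemma pi_div_two_sub_arctan_lt_inv {x : ℝ} (hx : 0 < x) : π / 2 - arctan x < x⁻¹ := by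
  rw [← arctan_inv_of_pos hx]
  have h := lt_tan (arctan_pos.mpr (inv_pos.mpr hx)) (arctan_lt_pi_div_two _)
  rwa [tan_arctan] at h

lemma exists_b₂Denom_lt_and_mul_arccot_lt {H : ℝ} (hH : 0 < H) (hne : H ≠ 1 / √3) :
    ∃ m : ℕ, 2 ≤ m ∧ b₂Denom H < m ∧ m * (π / 2 - arctan H) < π := by
  rcases hne.lt_or_gt with hlt | hgt
  · have hH3 : 3 * H ^ 2 < 1 := by
      rw [lt_div_iff₀ (by positivity)] at hlt
      nlinarith [sq_sqrt (zero_le_three (α := ℝ)), mul_pos hH (sqrt_pos.mpr (three_pos (α := ℝ)))]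
    refine ⟨2, le_rfl, mod_cast b₂Denom_lt_two hH3, ?_⟩
    linarith [arctan_pos.mpr hH]
  rcases le_or_gt H 1 with hle1 | hgt1
  · refine ⟨3, by norm_num, mod_cast b₂Denom_lt_three hH.le hle1, ?_⟩
    linarith [pi_div_two_sub_arctan_lt_pi_div_three hgt]
  rcases le_or_gt H (3 / 2) with hle | hgt
  · refine ⟨4, by norm_num, mod_cast b₂Denom_lt_four hH.le hle, ?_⟩
    linarith [pi_div_two_sub_arctan_lt_pi_div_four hgt1]
  have hg := one_lt_b₂Denom hH.le
  refine ⟨⌊b₂Denom H⌋₊ + 1, ?_, mod_cast Nat.lt_floor_add_one _, ?_⟩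
  · have := Nat.le_floor (mod_cast hg.le : ((1 : ℕ) : ℝ) ≤ b₂Denom H)
    omega
  have hm : ((⌊b₂Denom H⌋₊ + 1 : ℕ) : ℝ) < π * H := by
    push_cast
    linarith [Nat.floor_le (zero_le_one.trans hg.le), b₂Denom_add_one_lt hgt.le]
  calc _ < ((⌊b₂Denom H⌋₊ + 1 : ℕ) : ℝ) * H⁻¹ := by
        gcongr; exact pi_div_two_sub_arctan_lt_inv hH
    _ < π * H * H⁻¹ := by gcongr
    _ = π := by field_simp

/-- For every `H > 0` with `H ≠ 1/√3` there is an integer `m ≥ 2` with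
`2 arccot H < 2π/m < b₂ H`, where `arccot H = π/2 − arctan H` and
`b₂ H = √2 π (H+√(1+H²))^{3/2} / ((1+H²)^{1/4}(1+2H²+2H√(1+H²)))`. -/
theorem stmt_15 (H : ℝ) (hH : 0 < H) (hne : H ≠ 1 / Real.sqrt 3) (b₂ : ℝ → ℝ)
    (hb₂ : ∀ x : ℝ, b₂ x = Real.sqrt 2 * Real.pi
      * (x + Real.sqrt (1 + x ^ 2)) ^ ((3 : ℝ) / 2)
      / ((1 + x ^ 2) ^ ((1 : ℝ) / 4) * (1 + 2 * x ^ 2 + 2 * x * Real.sqrt (1 + x ^ 2)))) :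
    ∃ m : ℕ, 2 ≤ m ∧ 2 * (Real.pi / 2 - Real.arctan H) < 2 * Real.pi / (m : ℝ)
      ∧ 2 * Real.pi / (m : ℝ) < b₂ H := by
  obtain ⟨m, hm2, hgm, harc⟩ := exists_b₂Denom_lt_and_mul_arccot_lt hH hne
  have hm : (0 : ℝ) < m := by positivity
  refine ⟨m, hm2, ?_, ?_⟩
  · rw [lt_div_iff₀ hm]
    linarith
  · rw [hb₂, b₂_formula_eq]
    exact div_lt_div_of_pos_left (by positivity) (zero_lt_one.trans (one_lt_b₂Denom hH.le)) hgm
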